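/- arXiv:2403.12305 — 2 statements merged into one kernel-verified Lean document; each statement's English description precedes it below -/
import Mathlib

section
/- Assume conditions (a) and (e). Then for every u ∈ C₀^∞(ℝ^N) there exists a constant C > 0 such that ∫_{ℝ^N} ∫_{ℝ^N} Φ_{x,y}(|u(x) − u(y)|·K(x,y)) dx dy ≤ C; in particular the Gagliardo modular of u is finite. -/
open MeasureTheory Set Filter Topology Metric

noncomputable section

/-- The kernel `K(x,y) = 1 / (|x-y|^s · Φ_{x,y}^{-1}(|x-y|^N))`. -/
def Kker (N : ℕ) (s : ℝ)
    (Φinv : EuclideanSpace ℝ (Fin N) → EuclideanSpace ℝ (Fin N) → ℝ → ℝ)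
    (x y : EuclideanSpace ℝ (Fin N)) : ℝ :=
  (‖x - y‖ ^ s * Φinv x y (‖x - y‖ ^ (N : ℝ)))⁻¹

/-- Luxemburg norm in the Musielak space `L_{Φ̂ₓ}(ℝ^N)`. -/
def luxHat (N : ℕ)
    (Φ : EuclideanSpace ℝ (Fin N) → EuclideanSpace ℝ (Fin N) → ℝ → ℝ)
    (u : EuclideanSpace ℝ (Fin N) → ℝ) : ℝ :=
  sInf {l : ℝ | 0 < l ∧ ∫⁻ x, ENNReal.ofReal (Φ x x (|u x| / l)) ≤ 1}

/-- Luxemburg norm in the Musielak space `L_{Φ_{x,y}}(ℝ^N × ℝ^N)`. -/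
def luxPair (N : ℕ)
    (Φ : EuclideanSpace ℝ (Fin N) → EuclideanSpace ℝ (Fin N) → ℝ → ℝ)
    (v : EuclideanSpace ℝ (Fin N) × EuclideanSpace ℝ (Fin N) → ℝ) : ℝ :=
  sInf {l : ℝ | 0 < l ∧
    ∫⁻ p : EuclideanSpace ℝ (Fin N) × EuclideanSpace ℝ (Fin N),
      ENNReal.ofReal (Φ p.1 p.2 (|v p| / l)) ≤ 1}

/-- The Gagliardo seminorm `[u]_{s,Φ_{x,y}}`. -/
def gagSemi (N : ℕ) (s : ℝ)
    (Φ Φinv : EuclideanSpace ℝ (Fin N) → EuclideanSpace ℝ (Fin N) → ℝ → ℝ)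
    (u : EuclideanSpace ℝ (Fin N) → ℝ) : ℝ :=
  sInf {l : ℝ | 0 < l ∧
    ∫⁻ p : EuclideanSpace ℝ (Fin N) × EuclideanSpace ℝ (Fin N),
      ENNReal.ofReal (Φ p.1 p.2 (|u p.1 - u p.2| * Kker N s Φinv p.1 p.2 / l)) ≤ 1}

/-- The norm of the fractional Musielak–Sobolev space `W^{s,Φ_{x,y}}(ℝ^N)`. -/
def normW (N : ℕ) (s : ℝ)
    (Φ Φinv : EuclideanSpace ℝ (Fin N) → EuclideanSpace ℝ (Fin N) → ℝ → ℝ)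
    (u : EuclideanSpace ℝ (Fin N) → ℝ) : ℝ :=
  luxHat N Φ u + gagSemi N s Φ Φinv u

/-- Membership in the fractional Musielak–Sobolev space `W^{s,Φ_{x,y}}(ℝ^N)`. -/
def memW (N : ℕ) (s : ℝ)
    (Φ Φinv : EuclideanSpace ℝ (Fin N) → EuclideanSpace ℝ (Fin N) → ℝ → ℝ)
    (u : EuclideanSpace ℝ (Fin N) → ℝ) : Prop :=
  Measurable u ∧
  (∃ l : ℝ, 0 < l ∧ Integrable (fun x => Φ x x (l * |u x|))) ∧
  (∃ l : ℝ, 0 < l ∧ Integrable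
    (fun p : EuclideanSpace ℝ (Fin N) × EuclideanSpace ℝ (Fin N) =>
      Φ p.1 p.2 (l * |u p.1 - u p.2| * Kker N s Φinv p.1 p.2)))

theorem stmt9 (N : ℕ) (hN : 1 ≤ N)
    (φ : EuclideanSpace ℝ (Fin N) → EuclideanSpace ℝ (Fin N) → ℝ → ℝ)
    (hφ_meas : ∀ t : ℝ, Measurable fun p : EuclideanSpace ℝ (Fin N) × EuclideanSpace ℝ (Fin N) => φ p.1 p.2 t)
    (hφ_cont : ∀ x y, ContinuousOn (φ x y) (Ici 0))
    (hφ_nonneg : ∀ x y, ∀ t : ℝ, 0 ≤ t → 0 ≤ φ x y t)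
    (hφ_zero : ∀ x y, φ x y 0 = 0)
    (hφ_pos : ∀ x y, ∀ t : ℝ, 0 < t → 0 < φ x y t)
    (hφ_mono : ∀ x y, MonotoneOn (φ x y) (Ici 0))
    (hφ_top : ∀ x y, Tendsto (φ x y) atTop atTop)
    (Φ : EuclideanSpace ℝ (Fin N) → EuclideanSpace ℝ (Fin N) → ℝ → ℝ)
    (hΦ : ∀ x y t, Φ x y t = ∫ σ in (0:ℝ)..t, φ x y σ)
    (φm φp : ℝ) (hm1 : 1 < φm) (hmp : φm ≤ φp)
    (he : ∀ x y, ∀ t : ℝ, 0 < t →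
      φm ≤ t * φ x y t / Φ x y t ∧ t * φ x y t / Φ x y t ≤ φp)
    (s : ℝ) (hs : s ∈ Ioo (0:ℝ) 1)
    (Φinv : EuclideanSpace ℝ (Fin N) → EuclideanSpace ℝ (Fin N) → ℝ → ℝ)
    (hΦinv_nonneg : ∀ x y, ∀ t : ℝ, 0 ≤ t → 0 ≤ Φinv x y t)
    (hΦinv_right : ∀ x y, ∀ t : ℝ, 0 ≤ t → Φ x y (Φinv x y t) = t)
    (hΦinv_left : ∀ x y, ∀ t : ℝ, 0 ≤ t → Φinv x y (Φ x y t) = t)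
    (ha : ∃ l : ℝ, 0 < l ∧ Integrable
      (fun p : EuclideanSpace ℝ (Fin N) × EuclideanSpace ℝ (Fin N) =>
        Φ p.1 p.2 (l * min 1 ‖p.1 - p.2‖ * Kker N s Φinv p.1 p.2)))
    :
    ∀ u : EuclideanSpace ℝ (Fin N) → ℝ, ContDiff ℝ (⊤ : ℕ∞) u → HasCompactSupport u →
      Integrable (fun p : EuclideanSpace ℝ (Fin N) × EuclideanSpace ℝ (Fin N) =>
        Φ p.1 p.2 (|u p.1 - u p.2| * Kker N s Φinv p.1 p.2)) ∧
      ∃ C : ℝ, 0 < C ∧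
        (∫ p : EuclideanSpace ℝ (Fin N) × EuclideanSpace ℝ (Fin N),
          Φ p.1 p.2 (|u p.1 - u p.2| * Kker N s Φinv p.1 p.2)) ≤ C := by
  intro u hu_smooth hu_supp
  classical
  -- interval integrability of φ on nonnegative intervals
  have hφ_int : ∀ (x y : EuclideanSpace ℝ (Fin N)) (a b : ℝ), 0 ≤ a → a ≤ b →
      IntervalIntegrable (φ x y) MeasureTheory.volume a b := by
    intro x y a b ha0 hab
    refine MonotoneOn.intervalIntegrable ((hφ_mono x y).mono ?_)
    rw [Set.uIcc_of_le hab]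
    exact fun t ht => le_trans ha0 ht.1
  have hΦ0 : ∀ x y, Φ x y 0 = 0 := by
    intro x y; rw [hΦ]; simp
  have hΦ_nonneg : ∀ x y (t : ℝ), 0 ≤ t → 0 ≤ Φ x y t := by
    intro x y t ht
    rw [hΦ]
    exact intervalIntegral.integral_nonneg ht (fun σ hσ => hφ_nonneg x y σ hσ.1)
  have hΦ_mono : ∀ x y, ∀ t1 t2 : ℝ, 0 ≤ t1 → t1 ≤ t2 → Φ x y t1 ≤ Φ x y t2 := by
    intro x y t1 t2 h1 h12
    rw [hΦ, hΦ, ← intervalIntegral.integral_add_adjacent_intervals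
      (hφ_int x y 0 t1 le_rfl h1) (hφ_int x y t1 t2 h1 h12)]
    have h0 : 0 ≤ ∫ σ in t1..t2, φ x y σ :=
      intervalIntegral.integral_nonneg h12 (fun σ hσ => hφ_nonneg x y σ (le_trans h1 hσ.1))
    linarith
  have hΦ_pos : ∀ x y (t : ℝ), 0 < t → 0 < Φ x y t := by
    intro x y t ht
    rcases lt_or_eq_of_le (hΦ_nonneg x y t ht.le) with h | h
    · exact h
    · exfalso
      have h1 := (he x y t ht).1
      rw [← h, div_zero] at h1
      linarith
  have hkey : ∀ x y (t : ℝ), 0 < t → t * φ x y t ≤ φp * Φ x y t := by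
    intro x y t ht
    have h2 := (he x y t ht).2
    rw [div_le_iff₀ (hΦ_pos x y t ht)] at h2
    linarith
  -- FTC
  have hΦderiv : ∀ x y, ∀ t : ℝ, 0 < t → HasDerivAt (Φ x y) (φ x y t) t := by
    intro x y t ht
    have hfun : Φ x y = fun r => ∫ σ in (0:ℝ)..r, φ x y σ := funext (hΦ x y)
    rw [hfun]
    refine intervalIntegral.integral_hasDerivAt_right (hφ_int x y 0 t le_rfl ht.le) ?_ ?_
    · exact ContinuousOn.stronglyMeasurableAtFilter isOpen_Ioi
        ((hφ_cont x y).mono Ioi_subset_Ici_self) t ht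
    · exact (hφ_cont x y).continuousAt (mem_of_superset (Ioi_mem_nhds ht) Ioi_subset_Ici_self)
  -- scaling estimate from (e)
  have hscale : ∀ x y, ∀ a t : ℝ, 1 ≤ a → 0 ≤ t → Φ x y (a * t) ≤ a ^ φp * Φ x y t := by
    intro x y a t ha1 ht
    rcases eq_or_lt_of_le ht with h | h
    · rw [← h, mul_zero, hΦ0, mul_zero]
    · have ha0 : (0:ℝ) < a := lt_of_lt_of_le zero_lt_one ha1
      have hg' : ∀ r : ℝ, 0 < r → HasDerivAt (fun r => Φ x y r * r ^ (-φp))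
          (φ x y r * r ^ (-φp) + Φ x y r * (-φp * r ^ (-φp - 1))) r := by
        intro r hr
        exact (hΦderiv x y r hr).mul (Real.hasDerivAt_rpow_const (Or.inl hr.ne'))
      have hg_anti : AntitoneOn (fun r => Φ x y r * r ^ (-φp)) (Ioi 0) := by
        refine antitoneOn_of_deriv_nonpos (convex_Ioi 0) ?_ ?_ ?_
        · intro r hr
          exact ((hg' r hr).continuousAt).continuousWithinAt
        · rw [interior_Ioi]
          intro r hr
          exact ((hg' r hr).differentiableAt).differentiableWithinAt
        · rw [interior_Ioi]
          intro r hr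
          rw [(hg' r hr).deriv]
          have hr' : (0:ℝ) < r := hr
          have hc : 0 ≤ r ^ (-φp - 1) := Real.rpow_nonneg hr'.le _
          have h1 : r ^ (-φp) = r * r ^ (-φp - 1) := by
            rw [show -φp = (-φp - 1) + 1 by ring, Real.rpow_add hr', Real.rpow_one]; ring
          have hk := hkey x y r hr'
          have h2 := mul_le_mul_of_nonneg_right hk hc
          rw [h1]
          nlinarith
      have hle : t ≤ a * t := le_mul_of_one_le_left h.le ha1
      have hat : (0:ℝ) < a * t := mul_pos ha0 h
      have h3 : Φ x y (a * t) * (a * t) ^ (-φp) ≤ Φ x y t * t ^ (-φp) :=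
        hg_anti (mem_Ioi.mpr h) (mem_Ioi.mpr hat) hle
      have hpow : (0:ℝ) < (a * t) ^ φp := Real.rpow_pos_of_pos hat φp
      have h4 := mul_le_mul_of_nonneg_right h3 hpow.le
      have h5 : Φ x y (a * t) * (a * t) ^ (-φp) * (a * t) ^ φp = Φ x y (a * t) := by
        rw [mul_assoc, ← Real.rpow_add hat]
        simp
      have h6 : Φ x y t * t ^ (-φp) * (a * t) ^ φp = a ^ φp * Φ x y t := by
        rw [Real.mul_rpow ha0.le h.le, Real.rpow_neg h.le]
        have htp : (0:ℝ) < t ^ φp := Real.rpow_pos_of_pos h φp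
        field_simp
      rw [h5, h6] at h4
      exact h4
  -- joint measurability of the Carathéodory integrand
  have hψ_cont : ∀ x y : EuclideanSpace ℝ (Fin N), Continuous (fun σ : ℝ => φ x y (max σ 0)) := by
    intro x y
    exact (hφ_cont x y).comp_continuous (continuous_id.max continuous_const)
      (fun σ => le_max_right σ 0)
  have hψ_meas : Measurable (Function.uncurry
      (fun (σ : ℝ) (p : EuclideanSpace ℝ (Fin N) × EuclideanSpace ℝ (Fin N)) =>
        φ p.1 p.2 (max σ 0))) :=
    measurable_uncurry_of_continuous_of_measurable
      (fun p => hψ_cont p.1 p.2) (fun σ => hφ_meas (max σ 0))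
  -- measurability of p ↦ Φ p c
  have hΦmeas : ∀ c : ℝ, 0 ≤ c →
      Measurable (fun p : EuclideanSpace ℝ (Fin N) × EuclideanSpace ℝ (Fin N) =>
        Φ p.1 p.2 c) := by
    intro c hc
    have heq : (fun p : EuclideanSpace ℝ (Fin N) × EuclideanSpace ℝ (Fin N) => Φ p.1 p.2 c)
        = fun p => ∫ σ in Ioc (0:ℝ) c, φ p.1 p.2 (max σ 0) := by
      funext p
      rw [hΦ, intervalIntegral.integral_of_le hc]
      exact setIntegral_congr_fun measurableSet_Ioc (fun σ hσ => by rw [max_eq_left hσ.1.le])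
    rw [heq]
    have hSM : StronglyMeasurable
        (fun q : (EuclideanSpace ℝ (Fin N) × EuclideanSpace ℝ (Fin N)) × ℝ =>
          φ q.1.1 q.1.2 (max q.2 0)) :=
      (hψ_meas.comp measurable_swap).stronglyMeasurable
    exact (hSM.integral_prod_right' (ν := MeasureTheory.volume.restrict (Ioc (0:ℝ) c))).measurable
  -- monotonicity of Φinv
  have hΦinv_mono : ∀ x y, ∀ r1 r2 : ℝ, 0 ≤ r1 → r1 ≤ r2 → Φinv x y r1 ≤ Φinv x y r2 := by
    intro x y r1 r2 h1 h12
    by_contra hcon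
    push_neg at hcon
    have h2 : Φ x y (Φinv x y r2) ≤ Φ x y (Φinv x y r1) :=
      hΦ_mono x y _ _ (hΦinv_nonneg x y r2 (h1.trans h12)) hcon.le
    rw [hΦinv_right x y r1 h1, hΦinv_right x y r2 (h1.trans h12)] at h2
    have heq : r1 = r2 := le_antisymm h12 h2
    rw [heq] at hcon
    exact lt_irrefl _ hcon
  -- measurability of Φinv composed with a nonnegative measurable function
  have hΦinv_measR : ∀ R : EuclideanSpace ℝ (Fin N) × EuclideanSpace ℝ (Fin N) → ℝ,
      Measurable R → (∀ p, 0 ≤ R p) → Measurable (fun p => Φinv p.1 p.2 (R p)) := by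
    intro R hR hR0
    apply measurable_of_Iic
    intro b
    rcases lt_or_ge b 0 with hb | hb
    · have hempty : (fun p => Φinv p.1 p.2 (R p)) ⁻¹' Iic b = ∅ := by
        ext p
        simp only [mem_preimage, mem_Iic, mem_empty_iff_false, iff_false, not_le]
        exact lt_of_lt_of_le hb (hΦinv_nonneg p.1 p.2 (R p) (hR0 p))
      rw [hempty]
      exact MeasurableSet.empty
    · have hset : (fun p => Φinv p.1 p.2 (R p)) ⁻¹' Iic b = {p | R p ≤ Φ p.1 p.2 b} := by
        ext p
        simp only [mem_preimage, mem_Iic, mem_setOf_eq]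
        constructor
        · intro h
          have h2 := hΦ_mono p.1 p.2 _ _ (hΦinv_nonneg p.1 p.2 (R p) (hR0 p)) h
          rwa [hΦinv_right p.1 p.2 (R p) (hR0 p)] at h2
        · intro h
          have h2 := hΦinv_mono p.1 p.2 _ _ (hR0 p) h
          rwa [hΦinv_left p.1 p.2 b hb] at h2
      rw [hset]
      exact measurableSet_le hR (hΦmeas b hb)
  -- kernel nonnegativity and measurability
  have hK0 : ∀ x y : EuclideanSpace ℝ (Fin N), 0 ≤ Kker N s Φinv x y := fun x y =>
    inv_nonneg.mpr (mul_nonneg (Real.rpow_nonneg (norm_nonneg _) _)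
      (hΦinv_nonneg x y _ (Real.rpow_nonneg (norm_nonneg _) _)))
  have hnorm : Measurable (fun p : EuclideanSpace ℝ (Fin N) × EuclideanSpace ℝ (Fin N) =>
      ‖p.1 - p.2‖) := (continuous_fst.sub continuous_snd).norm.measurable
  have hKmeas : Measurable (fun p : EuclideanSpace ℝ (Fin N) × EuclideanSpace ℝ (Fin N) =>
      Kker N s Φinv p.1 p.2) := by
    have hR : Measurable (fun p : EuclideanSpace ℝ (Fin N) × EuclideanSpace ℝ (Fin N) =>
        ‖p.1 - p.2‖ ^ (N : ℝ)) :=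
      ((Real.continuous_rpow_const (by positivity)).comp
        ((continuous_fst.sub continuous_snd).norm)).measurable
    have hΦinvR := hΦinv_measR _ hR (fun p => Real.rpow_nonneg (norm_nonneg _) _)
    have hs' : Measurable (fun p : EuclideanSpace ℝ (Fin N) × EuclideanSpace ℝ (Fin N) =>
        ‖p.1 - p.2‖ ^ s) :=
      ((Real.continuous_rpow_const hs.1.le).comp
        ((continuous_fst.sub continuous_snd).norm)).measurable
    exact (hs'.mul hΦinvR).inv
  -- measurability and nonnegativity of the difference quotient
  have hu_cont : Continuous u := hu_smooth.continuous
  have hVmeas : Measurable (fun p : EuclideanSpace ℝ (Fin N) × EuclideanSpace ℝ (Fin N) =>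
      |u p.1 - u p.2| * Kker N s Φinv p.1 p.2) :=
    (((hu_cont.comp continuous_fst).sub (hu_cont.comp continuous_snd)).abs.measurable).mul hKmeas
  have hV0 : ∀ p : EuclideanSpace ℝ (Fin N) × EuclideanSpace ℝ (Fin N),
      0 ≤ |u p.1 - u p.2| * Kker N s Φinv p.1 p.2 := fun p =>
    mul_nonneg (abs_nonneg _) (hK0 _ _)
  -- measurability of the full integrand
  have hfmeas : Measurable (fun p : EuclideanSpace ℝ (Fin N) × EuclideanSpace ℝ (Fin N) =>
      Φ p.1 p.2 (|u p.1 - u p.2| * Kker N s Φinv p.1 p.2)) := by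
    apply measurable_of_Iic
    intro c
    rcases lt_or_ge c 0 with hc | hc
    · have hempty : (fun p : EuclideanSpace ℝ (Fin N) × EuclideanSpace ℝ (Fin N) =>
          Φ p.1 p.2 (|u p.1 - u p.2| * Kker N s Φinv p.1 p.2)) ⁻¹' Iic c = ∅ := by
        ext p
        simp only [mem_preimage, mem_Iic, mem_empty_iff_false, iff_false, not_le]
        exact lt_of_lt_of_le hc (hΦ_nonneg _ _ _ (hV0 p))
      rw [hempty]
      exact MeasurableSet.empty
    · have hset : (fun p : EuclideanSpace ℝ (Fin N) × EuclideanSpace ℝ (Fin N) =>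
          Φ p.1 p.2 (|u p.1 - u p.2| * Kker N s Φinv p.1 p.2)) ⁻¹' Iic c
          = {p | |u p.1 - u p.2| * Kker N s Φinv p.1 p.2 ≤ Φinv p.1 p.2 c} := by
        ext p
        simp only [mem_preimage, mem_Iic, mem_setOf_eq]
        constructor
        · intro h
          have h2 := hΦinv_mono p.1 p.2 _ _ (hΦ_nonneg _ _ _ (hV0 p)) h
          rwa [hΦinv_left p.1 p.2 _ (hV0 p)] at h2
        · intro h
          have h2 := hΦ_mono p.1 p.2 _ _ (hV0 p) h
          rwa [hΦinv_right p.1 p.2 c hc] at h2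
      rw [hset]
      exact measurableSet_le hVmeas (hΦinv_measR (fun _ => c) measurable_const (fun _ => hc))
  -- bounds on u
  obtain ⟨l, hl, hint⟩ := ha
  obtain ⟨M, hM⟩ := hu_supp.exists_bound_of_continuous hu_cont
  obtain ⟨L, hL⟩ := ContDiff.lipschitzWith_of_hasCompactSupport hu_supp hu_smooth (by simp)
  have hM0 : (0:ℝ) ≤ M := le_trans (norm_nonneg _) (hM 0)
  set A : ℝ := max (2 * M) (L : ℝ) with hA_def
  have hΔ : ∀ x y : EuclideanSpace ℝ (Fin N), |u x - u y| ≤ A * min 1 ‖x - y‖ := by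
    intro x y
    rcases le_total ‖x - y‖ 1 with h | h
    · rw [min_eq_right h]
      have hlip := hL.dist_le_mul x y
      rw [Real.dist_eq, dist_eq_norm] at hlip
      calc |u x - u y| ≤ (L : ℝ) * ‖x - y‖ := hlip
        _ ≤ A * ‖x - y‖ := mul_le_mul_of_nonneg_right (le_max_right _ _) (norm_nonneg _)
    · rw [min_eq_left h, mul_one]
      have htri := norm_sub_le (u x) (u y)
      rw [Real.norm_eq_abs] at htri
      calc |u x - u y| ≤ ‖u x‖ + ‖u y‖ := htri
        _ ≤ M + M := add_le_add (hM x) (hM y)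
        _ = 2 * M := by ring
        _ ≤ A := le_max_left _ _
  set a : ℝ := max 1 (A / l) with ha_def
  have ha1 : (1:ℝ) ≤ a := le_max_left _ _
  have hAal : A ≤ a * l := by
    have h1 : A / l ≤ a := le_max_right _ _
    calc A = A / l * l := by field_simp
      _ ≤ a * l := mul_le_mul_of_nonneg_right h1 hl.le
  have hW0 : ∀ p : EuclideanSpace ℝ (Fin N) × EuclideanSpace ℝ (Fin N),
      0 ≤ l * min 1 ‖p.1 - p.2‖ * Kker N s Φinv p.1 p.2 := fun p =>
    mul_nonneg (mul_nonneg hl.le (le_min zero_le_one (norm_nonneg _))) (hK0 _ _)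
  -- pointwise bound
  have hpt : ∀ p : EuclideanSpace ℝ (Fin N) × EuclideanSpace ℝ (Fin N),
      Φ p.1 p.2 (|u p.1 - u p.2| * Kker N s Φinv p.1 p.2)
      ≤ a ^ φp * Φ p.1 p.2 (l * min 1 ‖p.1 - p.2‖ * Kker N s Φinv p.1 p.2) := by
    intro p
    have h1 : |u p.1 - u p.2| ≤ a * l * min 1 ‖p.1 - p.2‖ :=
      le_trans (hΔ p.1 p.2)
        (mul_le_mul_of_nonneg_right hAal (le_min zero_le_one (norm_nonneg _)))
    have hVle : |u p.1 - u p.2| * Kker N s Φinv p.1 p.2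
        ≤ a * (l * min 1 ‖p.1 - p.2‖ * Kker N s Φinv p.1 p.2) := by
      calc |u p.1 - u p.2| * Kker N s Φinv p.1 p.2
          ≤ a * l * min 1 ‖p.1 - p.2‖ * Kker N s Φinv p.1 p.2 :=
            mul_le_mul_of_nonneg_right h1 (hK0 _ _)
        _ = a * (l * min 1 ‖p.1 - p.2‖ * Kker N s Φinv p.1 p.2) := by ring
    calc Φ p.1 p.2 (|u p.1 - u p.2| * Kker N s Φinv p.1 p.2)
        ≤ Φ p.1 p.2 (a * (l * min 1 ‖p.1 - p.2‖ * Kker N s Φinv p.1 p.2)) :=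
          hΦ_mono _ _ _ _ (hV0 p) hVle
      _ ≤ a ^ φp * Φ p.1 p.2 (l * min 1 ‖p.1 - p.2‖ * Kker N s Φinv p.1 p.2) :=
          hscale p.1 p.2 a _ ha1 (hW0 p)
  have hbound_int : Integrable
      (fun p : EuclideanSpace ℝ (Fin N) × EuclideanSpace ℝ (Fin N) =>
        a ^ φp * Φ p.1 p.2 (l * min 1 ‖p.1 - p.2‖ * Kker N s Φinv p.1 p.2)) :=
    hint.const_mul _
  have hf_int : Integrable
      (fun p : EuclideanSpace ℝ (Fin N) × EuclideanSpace ℝ (Fin N) =>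
        Φ p.1 p.2 (|u p.1 - u p.2| * Kker N s Φinv p.1 p.2)) := by
    refine hbound_int.mono' hfmeas.aestronglyMeasurable (Filter.Eventually.of_forall fun p => ?_)
    rw [Real.norm_eq_abs, abs_of_nonneg (hΦ_nonneg _ _ _ (hV0 p))]
    exact hpt p
  refine ⟨hf_int, (∫ p : EuclideanSpace ℝ (Fin N) × EuclideanSpace ℝ (Fin N),
      a ^ φp * Φ p.1 p.2 (l * min 1 ‖p.1 - p.2‖ * Kker N s Φinv p.1 p.2)) + 1, ?_, ?_⟩
  · have h0 : 0 ≤ ∫ p : EuclideanSpace ℝ (Fin N) × EuclideanSpace ℝ (Fin N),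
        a ^ φp * Φ p.1 p.2 (l * min 1 ‖p.1 - p.2‖ * Kker N s Φinv p.1 p.2) :=
      integral_nonneg fun p => mul_nonneg
        (Real.rpow_nonneg (by linarith : (0:ℝ) ≤ a) φp) (hΦ_nonneg _ _ _ (hW0 p))
    linarith
  · have hmono := integral_mono hf_int hbound_int hpt
    linarith
end
end

section
/- Assume conditions (a), (b) and (e). Then every u ∈ C₀^∞(ℝ^N) belongs to the fractional Musielak–Sobolev space W^{s,Φ_{x,y}}(ℝ^N). -/
open MeasureTheory Set Filter Topology Metric

noncomputable section

theorem stmt10 (N : ℕ) (hN : 1 ≤ N)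
    (φ : EuclideanSpace ℝ (Fin N) → EuclideanSpace ℝ (Fin N) → ℝ → ℝ)
    (hφ_meas : ∀ t : ℝ, Measurable fun p : EuclideanSpace ℝ (Fin N) × EuclideanSpace ℝ (Fin N) => φ p.1 p.2 t)
    (hφ_cont : ∀ x y, ContinuousOn (φ x y) (Ici 0))
    (hφ_nonneg : ∀ x y, ∀ t : ℝ, 0 ≤ t → 0 ≤ φ x y t)
    (hφ_zero : ∀ x y, φ x y 0 = 0)
    (hφ_pos : ∀ x y, ∀ t : ℝ, 0 < t → 0 < φ x y t)
    (hφ_mono : ∀ x y, MonotoneOn (φ x y) (Ici 0))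
    (hφ_top : ∀ x y, Tendsto (φ x y) atTop atTop)
    (Φ : EuclideanSpace ℝ (Fin N) → EuclideanSpace ℝ (Fin N) → ℝ → ℝ)
    (hΦ : ∀ x y t, Φ x y t = ∫ σ in (0:ℝ)..t, φ x y σ)
    (φm φp : ℝ) (hm1 : 1 < φm) (hmp : φm ≤ φp)
    (he : ∀ x y, ∀ t : ℝ, 0 < t →
      φm ≤ t * φ x y t / Φ x y t ∧ t * φ x y t / Φ x y t ≤ φp)
    (s : ℝ) (hs : s ∈ Ioo (0:ℝ) 1)
    (Φinv : EuclideanSpace ℝ (Fin N) → EuclideanSpace ℝ (Fin N) → ℝ → ℝ)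
    (hΦinv_nonneg : ∀ x y, ∀ t : ℝ, 0 ≤ t → 0 ≤ Φinv x y t)
    (hΦinv_right : ∀ x y, ∀ t : ℝ, 0 ≤ t → Φ x y (Φinv x y t) = t)
    (hΦinv_left : ∀ x y, ∀ t : ℝ, 0 ≤ t → Φinv x y (Φ x y t) = t)
    (ha : ∃ l : ℝ, 0 < l ∧ Integrable
      (fun p : EuclideanSpace ℝ (Fin N) × EuclideanSpace ℝ (Fin N) =>
        Φ p.1 p.2 (l * min 1 ‖p.1 - p.2‖ * Kker N s Φinv p.1 p.2)))
    (hb : ∀ c : ℝ, 0 < c → ∀ A : Set (EuclideanSpace ℝ (Fin N)), IsCompact A →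
      IntegrableOn (fun p : EuclideanSpace ℝ (Fin N) × EuclideanSpace ℝ (Fin N) => Φ p.1 p.2 c) (A ×ˢ A) ∧
      IntegrableOn (fun x => Φ x x c) A)
    :
    ∀ u : EuclideanSpace ℝ (Fin N) → ℝ, ContDiff ℝ (⊤ : ℕ∞) u → HasCompactSupport u →
      memW N s Φ Φinv u := by
  classical
  intro u hu hsupp
  obtain ⟨s0, s1⟩ := hs
  -- interval integrability of φ on nonneg intervals
  have hIntInt : ∀ x y (a b : ℝ), 0 ≤ a → 0 ≤ b →
      IntervalIntegrable (φ x y) volume a b := by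
    intro x y a b ha hb
    apply ContinuousOn.intervalIntegrable
    apply (hφ_cont x y).mono
    intro σ hσ
    rcases le_total a b with h | h
    · rw [uIcc_of_le h] at hσ; exact le_trans ha hσ.1
    · rw [uIcc_of_ge h] at hσ; exact le_trans hb hσ.1
  have hΦ0 : ∀ x y, Φ x y 0 = 0 := by
    intro x y; rw [hΦ, intervalIntegral.integral_same]
  have hΦnn : ∀ x y (t : ℝ), 0 ≤ t → 0 ≤ Φ x y t := by
    intro x y t ht
    rw [hΦ]
    exact intervalIntegral.integral_nonneg ht fun σ hσ => hφ_nonneg x y σ hσ.1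
  have hsplit : ∀ x y (a b : ℝ), 0 ≤ a → a ≤ b →
      Φ x y b = Φ x y a + ∫ σ in a..b, φ x y σ := by
    intro x y a b ha hab
    rw [hΦ, hΦ,
      ← intervalIntegral.integral_add_adjacent_intervals (hIntInt x y 0 a le_rfl ha)
        (hIntInt x y a b ha (ha.trans hab))]
  have hΦmono : ∀ x y (a b : ℝ), 0 ≤ a → a ≤ b → Φ x y a ≤ Φ x y b := by
    intro x y a b ha hab
    rw [hsplit x y a b ha hab]
    have h0 : 0 ≤ ∫ σ in a..b, φ x y σ :=
      intervalIntegral.integral_nonneg hab fun σ hσ => hφ_nonneg x y σ (ha.trans hσ.1)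
    linarith
  have hΦstrict : ∀ x y (a b : ℝ), 0 ≤ a → a < b → Φ x y a < Φ x y b := by
    intro x y a b ha hab
    rw [hsplit x y a b ha hab.le]
    have h0 : 0 < ∫ σ in a..b, φ x y σ :=
      intervalIntegral.intervalIntegral_pos_of_pos_on
        (hIntInt x y a b ha (ha.trans hab.le))
        (fun σ hσ => hφ_pos x y σ (lt_of_le_of_lt ha hσ.1)) hab
    linarith
  -- modified kernel, continuous in t
  set φ' : (EuclideanSpace ℝ (Fin N) × EuclideanSpace ℝ (Fin N)) → ℝ → ℝ :=
    fun p t => φ p.1 p.2 (max t 0) with hφ'def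
  have hφ'_cont : ∀ p, Continuous (φ' p) := by
    intro p
    exact (hφ_cont p.1 p.2).comp_continuous (continuous_id.max continuous_const)
      (fun t => le_max_right t 0)
  have hφ'_meas : ∀ t : ℝ, Measurable fun p => φ' p t := fun t => hφ_meas (max t 0)
  have hG : Measurable (Function.uncurry fun (t : ℝ) p => φ' p t) :=
    measurable_uncurry_of_continuous_of_measurable (fun p => hφ'_cont p) hφ'_meas
  have hGsm : StronglyMeasurable
      fun q : (EuclideanSpace ℝ (Fin N) × EuclideanSpace ℝ (Fin N)) × ℝ => φ' q.1 q.2 := by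
    have h1 : Measurable
        fun q : (EuclideanSpace ℝ (Fin N) × EuclideanSpace ℝ (Fin N)) × ℝ => φ' q.1 q.2 :=
      hG.comp measurable_swap
    exact h1.stronglyMeasurable
  set F : (EuclideanSpace ℝ (Fin N) × EuclideanSpace ℝ (Fin N)) → ℝ → ℝ :=
    fun p t => ∫ σ in (0:ℝ)..t, φ' p σ with hFdef
  have hF_cont : ∀ p, Continuous (F p) := fun p =>
    intervalIntegral.continuous_primitive (fun a b => (hφ'_cont p).intervalIntegrable a b) 0
  have hF_meas : ∀ t : ℝ, Measurable fun p => F p t := by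
    intro t
    rcases le_or_gt 0 t with ht | ht
    · have heq : (fun p => F p t) = fun p => ∫ σ in Ioc (0:ℝ) t, φ' p σ := by
        funext p
        exact intervalIntegral.integral_of_le ht
      rw [heq]
      exact (hGsm.integral_prod_right' (ν := volume.restrict (Ioc (0:ℝ) t))).measurable
    · have heq : (fun p => F p t) = fun _ => (0:ℝ) := by
        funext p
        have hz : ∀ σ ∈ uIcc (0:ℝ) t, φ' p σ = (fun _ : ℝ => (0:ℝ)) σ := by
          intro σ hσ
          rw [uIcc_of_ge ht.le] at hσ
          simp only [hφ'def]
          rw [max_eq_right hσ.2]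
          exact hφ_zero p.1 p.2
        calc F p t = ∫ σ in (0:ℝ)..t, (0:ℝ) := intervalIntegral.integral_congr hz
          _ = 0 := by simp
      rw [heq]; exact measurable_const
  have hFu : Measurable (Function.uncurry fun (t : ℝ) p => F p t) :=
    measurable_uncurry_of_continuous_of_measurable (fun p => hF_cont p) hF_meas
  have hΦF : ∀ (p : EuclideanSpace ℝ (Fin N) × EuclideanSpace ℝ (Fin N)) (t : ℝ),
      0 ≤ t → Φ p.1 p.2 t = F p t := by
    intro p t ht
    rw [hΦ]
    apply intervalIntegral.integral_congr
    intro σ hσ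
    rw [uIcc_of_le ht] at hσ
    simp only [hφ'def]
    rw [max_eq_left hσ.1]
  have hΦcomp : ∀ {X : Type} [MeasurableSpace X]
      (e : X → EuclideanSpace ℝ (Fin N) × EuclideanSpace ℝ (Fin N)) (g : X → ℝ),
      Measurable e → Measurable g → (∀ x, 0 ≤ g x) →
      Measurable fun x => Φ (e x).1 (e x).2 (g x) := by
    intro X _ e g he hg hg0
    have heq : (fun x => Φ (e x).1 (e x).2 (g x)) =
        fun x => Function.uncurry (fun (t : ℝ) p => F p t) (g x, e x) := by
      funext x
      exact hΦF (e x) (g x) (hg0 x)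
    rw [heq]
    exact hFu.comp (hg.prodMk he)
  -- Φinv and kernel measurability
  have hΦinv_iff : ∀ x y (c r : ℝ), 0 ≤ c → 0 ≤ r → (Φinv x y c ≤ r ↔ c ≤ Φ x y r) := by
    intro x y c r hc hr
    constructor
    · intro h
      have h2 := hΦmono x y _ r (hΦinv_nonneg x y c hc) h
      rwa [hΦinv_right x y c hc] at h2
    · intro h
      by_contra hcon
      push_neg at hcon
      have h2 := hΦstrict x y r _ hr hcon
      rw [hΦinv_right x y c hc] at h2
      linarith
  have hnormmeas : Measurable
      fun p : EuclideanSpace ℝ (Fin N) × EuclideanSpace ℝ (Fin N) => ‖p.1 - p.2‖ :=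
    (continuous_fst.sub continuous_snd).norm.measurable
  have hrpowN : Measurable
      fun p : EuclideanSpace ℝ (Fin N) × EuclideanSpace ℝ (Fin N) => ‖p.1 - p.2‖ ^ (N:ℝ) :=
    ((continuous_fst.sub continuous_snd).norm.rpow_const
      (fun _ => Or.inr (Nat.cast_nonneg N))).measurable
  have hrpows : Measurable
      fun p : EuclideanSpace ℝ (Fin N) × EuclideanSpace ℝ (Fin N) => ‖p.1 - p.2‖ ^ s :=
    ((continuous_fst.sub continuous_snd).norm.rpow_const
      (fun _ => Or.inr s0.le)).measurable
  have hh_meas : Measurable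
      fun p : EuclideanSpace ℝ (Fin N) × EuclideanSpace ℝ (Fin N) =>
        Φinv p.1 p.2 (‖p.1 - p.2‖ ^ (N:ℝ)) := by
    apply measurable_of_Iic
    intro r
    rcases lt_or_ge r 0 with hr | hr
    · have heq : (fun p : EuclideanSpace ℝ (Fin N) × EuclideanSpace ℝ (Fin N) =>
          Φinv p.1 p.2 (‖p.1 - p.2‖ ^ (N:ℝ))) ⁻¹' Iic r = ∅ := by
        apply eq_empty_iff_forall_notMem.2
        intro p hp
        have h0 : 0 ≤ Φinv p.1 p.2 (‖p.1 - p.2‖ ^ (N:ℝ)) :=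
          hΦinv_nonneg _ _ _ (Real.rpow_nonneg (norm_nonneg _) _)
        simp only [mem_preimage, mem_Iic] at hp
        linarith
      rw [heq]; exact MeasurableSet.empty
    · have heq : (fun p : EuclideanSpace ℝ (Fin N) × EuclideanSpace ℝ (Fin N) =>
          Φinv p.1 p.2 (‖p.1 - p.2‖ ^ (N:ℝ))) ⁻¹' Iic r
          = {p : EuclideanSpace ℝ (Fin N) × EuclideanSpace ℝ (Fin N) |
              ‖p.1 - p.2‖ ^ (N:ℝ) ≤ Φ p.1 p.2 r} := by
        ext p
        simp only [mem_preimage, mem_Iic, mem_setOf_eq]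
        exact hΦinv_iff p.1 p.2 _ r (Real.rpow_nonneg (norm_nonneg _) _) hr
      rw [heq]
      apply measurableSet_le
      · exact hrpowN
      · have heq2 : (fun p : EuclideanSpace ℝ (Fin N) × EuclideanSpace ℝ (Fin N) =>
            Φ p.1 p.2 r) = fun p => F p r := by
          funext p; exact hΦF p r hr
        rw [heq2]; exact hF_meas r
  have hK_nonneg : ∀ p : EuclideanSpace ℝ (Fin N) × EuclideanSpace ℝ (Fin N),
      0 ≤ Kker N s Φinv p.1 p.2 := by
    intro p
    apply inv_nonneg.2
    exact mul_nonneg (Real.rpow_nonneg (norm_nonneg _) _)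
      (hΦinv_nonneg _ _ _ (Real.rpow_nonneg (norm_nonneg _) _))
  have hK_meas : Measurable
      fun p : EuclideanSpace ℝ (Fin N) × EuclideanSpace ℝ (Fin N) =>
        Kker N s Φinv p.1 p.2 := by
    simp only [Kker]
    exact (hrpows.mul hh_meas).inv
  -- properties of u
  have hu_cont : Continuous u := hu.continuous
  have hu_meas : Measurable u := hu_cont.measurable
  obtain ⟨C0, hC0⟩ := hsupp.exists_bound_of_continuous hu_cont
  set M : ℝ := max C0 1 with hMdef
  have hM0 : (0:ℝ) < M := lt_of_lt_of_le one_pos (le_max_right _ _)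
  have huM : ∀ x, |u x| ≤ M := fun x =>
    le_trans (by simpa using hC0 x) (le_max_left _ _)
  obtain ⟨L, hL⟩ := ContDiff.lipschitzWith_of_hasCompactSupport hsupp hu (by simp)
  refine ⟨hu_meas, ?_, ?_⟩
  · -- the Φ̂ term
    refine ⟨1, one_pos, ?_⟩
    have hAc : IsCompact (tsupport u) := hsupp
    have hAm : MeasurableSet (tsupport u) := (isClosed_tsupport u).measurableSet
    have hbd := (hb M hM0 (tsupport u) hAc).2
    apply Integrable.mono' (hbd.integrable_indicator hAm)
    · exact (hΦcomp (fun x => (x, x)) (fun x => 1 * |u x|)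
        (measurable_id.prodMk measurable_id)
        (measurable_const.mul hu_meas.abs) (fun x => by positivity)).aestronglyMeasurable
    · apply ae_of_all
      intro x
      rw [Real.norm_of_nonneg (hΦnn x x _ (by positivity))]
      by_cases hx : x ∈ tsupport u
      · rw [indicator_of_mem hx]
        apply hΦmono x x _ M (by positivity)
        rw [one_mul]; exact huM x
      · rw [indicator_of_notMem hx]
        rw [image_eq_zero_of_notMem_tsupport hx]
        have h1 : (1:ℝ) * |(0:ℝ)| = 0 := by simp
        rw [h1, hΦ0]
  · -- the Gagliardo term
    obtain ⟨lam, hlam, hint⟩ := ha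
    set C : ℝ := max (L:ℝ) (2 * M) with hCdef
    have hC0 : (0:ℝ) < C := lt_of_lt_of_le (by linarith) (le_max_right _ _)
    have hl0 : (0:ℝ) < lam / C := div_pos hlam hC0
    refine ⟨lam / C, hl0, ?_⟩
    have harg_nn : ∀ p : EuclideanSpace ℝ (Fin N) × EuclideanSpace ℝ (Fin N),
        0 ≤ lam / C * |u p.1 - u p.2| * Kker N s Φinv p.1 p.2 := fun p =>
      mul_nonneg (mul_nonneg hl0.le (abs_nonneg _)) (hK_nonneg p)
    have key : ∀ p : EuclideanSpace ℝ (Fin N) × EuclideanSpace ℝ (Fin N),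
        lam / C * |u p.1 - u p.2| * Kker N s Φinv p.1 p.2
        ≤ lam * min 1 ‖p.1 - p.2‖ * Kker N s Φinv p.1 p.2 := by
      intro p
      apply mul_le_mul_of_nonneg_right _ (hK_nonneg p)
      have hbound : |u p.1 - u p.2| ≤ C * min 1 ‖p.1 - p.2‖ := by
        rcases le_total ‖p.1 - p.2‖ 1 with h | h
        · rw [min_eq_right h]
          calc |u p.1 - u p.2| = dist (u p.1) (u p.2) := (Real.dist_eq _ _).symm
            _ ≤ L * dist p.1 p.2 := hL.dist_le_mul _ _
            _ = (L:ℝ) * ‖p.1 - p.2‖ := by rw [dist_eq_norm]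
            _ ≤ C * ‖p.1 - p.2‖ :=
                mul_le_mul_of_nonneg_right (le_max_left _ _) (norm_nonneg _)
        · rw [min_eq_left h]
          calc |u p.1 - u p.2| ≤ |u p.1| + |u p.2| := by
                simpa [sub_eq_add_neg, abs_neg] using abs_add_le (u p.1) (-(u p.2))
            _ ≤ M + M := add_le_add (huM _) (huM _)
            _ = 2 * M := by ring
            _ ≤ C := le_max_right _ _
            _ = C * 1 := (mul_one C).symm
      calc lam / C * |u p.1 - u p.2| ≤ lam / C * (C * min 1 ‖p.1 - p.2‖) :=
            mul_le_mul_of_nonneg_left hbound hl0.le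
        _ = lam * min 1 ‖p.1 - p.2‖ := by field_simp
    apply Integrable.mono' hint
    · exact (hΦcomp (fun p => p)
        (fun p => lam / C * |u p.1 - u p.2| * Kker N s Φinv p.1 p.2) measurable_id
        ((measurable_const.mul
          ((hu_meas.comp measurable_fst).sub (hu_meas.comp measurable_snd)).abs).mul hK_meas)
        harg_nn).aestronglyMeasurable
    · apply ae_of_all
      intro p
      rw [Real.norm_of_nonneg (hΦnn _ _ _ (harg_nn p))]
      exact hΦmono p.1 p.2 _ _ (harg_nn p) (key p)
end
end
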